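/- arXiv:2309.06669 — 2 statements merged into one kernel-verified Lean document; each statement's English description precedes it below -/
import Mathlib

section
/- Every countable 2-connected graph with at least three vertices admits an ear decomposition: a sequence (G_n) of subgraphs with G_0 a cycle, each G_n either equal to G_{n-1} or obtained from G_{n-1} by adding a path (an 'ear') joining two distinct vertices of G_{n-1} and internally disjoint from G_{n-1}, whose union is G. -/
open SimpleGraph

/-- A graph is 2-connected: connected, has at least 3 vertices, and deleting
any single vertex leaves it connected. -/
def TwoConnected {V : Type*} (G : SimpleGraph V) : Prop :=
  G.Connected ∧ (∃ a b c : V, a ≠ b ∧ a ≠ c ∧ b ≠ c) ∧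
    ∀ v : V, ((⊤ : G.Subgraph).deleteVerts {v}).coe.Connected

/-- A cycle: a finite connected 2-regular (nonempty) subgraph. -/
def IsCycleSubgraph {V : Type*} (G : SimpleGraph V) (C : G.Subgraph) : Prop :=
  C.verts.Finite ∧ C.verts.Nonempty ∧ C.coe.Connected ∧
    ∀ v ∈ C.verts, (C.neighborSet v).ncard = 2

/-- `B` is obtained from `A` by adding an ear: a path joining two distinct
vertices of `A`, internally disjoint from `A`. -/
def IsEarStep {V : Type*} (G : SimpleGraph V) (A B : G.Subgraph) : Prop :=
  ∃ (x y : V) (p : G.Walk x y), x ≠ y ∧ p.IsPath ∧ x ∈ A.verts ∧ y ∈ A.verts ∧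
    (∀ v ∈ p.support, v ≠ x → v ≠ y → v ∉ A.verts) ∧ B = A ⊔ p.toSubgraph

/-- `G` is a minor of `H`: there are pairwise disjoint nonempty connected
branch sets in `H`, one for each vertex of `G`, with an `H`-edge between the
branch sets of any two `G`-adjacent vertices. -/
def IsMinor {V : Type u} {W : Type v} (G : SimpleGraph V) (H : SimpleGraph W) : Prop :=
  ∃ φ : V → Set W,
    (∀ a, (φ a).Nonempty) ∧
    (∀ a, (H.induce (φ a)).Connected) ∧
    (Pairwise fun a b => Disjoint (φ a) (φ b)) ∧
    ∀ a b, G.Adj a b → ∃ x ∈ φ a, ∃ y ∈ φ b, H.Adj x y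

/-!
Start from a cycle: a vertex `u`, two neighbours `v ≠ w` and a `v`–`w` path avoiding `u`.
Then list all ordered pairs of vertices so that each pair recurs infinitely often. When the
pair `(u, v)` comes up while `u` has been reached and `uv` is an edge, follow a path from `v`
to some other vertex of the current subgraph inside `G - u`, which is connected, and stop at
its first vertex in the subgraph: together with `uv` this is an ear. Every edge at a reached
vertex is thus eventually added, and as `G` is connected the union is all of `G`.
-/

namespace SimpleGraph

variable {V : Type*} {G : SimpleGraph V}

lemma Walk.IsPath.exists_isPath_to_first_mem {S : Set V} {u w : V} {p : G.Walk u w}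
    (hp : p.IsPath) (hw : w ∈ S) :
    ∃ x ∈ S, ∃ q : G.Walk u x, q.IsPath ∧ q.support ⊆ p.support ∧
      ∀ z ∈ q.support, z ∈ S → z = x := by
  induction p with
  | nil => exact ⟨_, hw, .nil, .nil, by simp, by simp⟩
  | @cons a _ _ h r ih =>
    rw [Walk.cons_isPath_iff] at hp
    by_cases haS : a ∈ S
    · exact ⟨a, haS, .nil, .nil, by simp, by simp⟩
    obtain ⟨x, hxS, q, hq, hqp, hqS⟩ := ih hp.1 hw
    refine ⟨x, hxS, .cons h q, hq.cons fun ha => hp.2 (hqp ha), ?_, ?_⟩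
    · simpa using List.cons_subset_cons _ hqp
    · simp only [Walk.support_cons, List.mem_cons, forall_eq_or_imp]
      exact ⟨fun ha => absurd ha haS, hqS⟩

lemma Subgraph.eq_top_of_adj_closed (hG : G.Connected) {H : G.Subgraph}
    (hne : H.verts.Nonempty) (hclosed : ∀ u v, u ∈ H.verts → G.Adj u v → H.Adj u v) :
    H = ⊤ := by
  obtain ⟨w, hw⟩ := hne
  have hverts (v : V) : v ∈ H.verts := by
    obtain ⟨p⟩ := hG.preconnected w v
    induction p with
    | nil => exact hw
    | cons h _ ih => exact ih (hclosed _ _ hw h).snd_mem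
  exact le_antisymm le_top ⟨fun v _ => hverts v, fun u v h => hclosed u v (hverts u) h⟩

lemma exists_nat_seq_frequently_eq (α : Type*) [Nonempty α] [Countable α] :
    ∃ e : ℕ → α, ∀ a m, ∃ n, m ≤ n ∧ e n = a := by
  obtain ⟨f, hf⟩ := exists_surjective_nat α
  refine ⟨fun n => f n.unpair.2, fun a m => ?_⟩
  obtain ⟨k, rfl⟩ := hf a
  exact ⟨Nat.pair m k, Nat.left_le_pair m k, by simp⟩

lemma Subgraph.iSup_eq_top_of_monotone (hG : G.Connected) {Gs : ℕ → G.Subgraph}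
    (hmono : Monotone Gs) (h0 : (Gs 0).verts.Nonempty) {e : ℕ → V × V}
    (he : ∀ a m, ∃ n, m ≤ n ∧ e n = a)
    (hstep : ∀ n, (e n).1 ∈ (Gs n).verts → G.Adj (e n).1 (e n).2 →
      (Gs (n + 1)).Adj (e n).1 (e n).2) :
    ⨆ n, Gs n = ⊤ := by
  refine Subgraph.eq_top_of_adj_closed hG ?_ fun u v hu huv => ?_
  · exact h0.mono (Subgraph.verts_mono (le_iSup Gs 0))
  · rw [Subgraph.verts_iSup, Set.mem_iUnion] at hu
    obtain ⟨m, hu⟩ := hu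
    obtain ⟨n, hmn, hn⟩ := he (u, v) m
    have hadj := hstep n
    rw [hn] at hadj
    exact Subgraph.iSup_adj.2 ⟨n + 1, hadj (Subgraph.verts_mono (hmono hmn) hu) huv⟩

lemma IsEarStep.le {A B : G.Subgraph} (h : IsEarStep G A B) : A ≤ B := by
  obtain ⟨_, _, _, _, _, _, _, _, rfl⟩ := h
  exact le_sup_left

lemma IsCycleSubgraph.verts_nontrivial {C : G.Subgraph} (hC : IsCycleSubgraph G C) :
    C.verts.Nontrivial := by
  obtain ⟨-, ⟨v, hv⟩, -, hreg⟩ := hC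
  obtain ⟨w, hw⟩ : (C.neighborSet v).Nonempty :=
    Set.nonempty_of_ncard_ne_zero (by rw [hreg v hv]; norm_num)
  exact ⟨v, hv, w, C.edge_vert (C.adj_symm hw), (C.adj_sub hw).ne⟩

lemma Walk.IsCycle.isCycleSubgraph {u : V} {c : G.Walk u u} (hc : c.IsCycle) :
    IsCycleSubgraph G c.toSubgraph := by
  refine ⟨?_, ⟨u, c.start_mem_verts_toSubgraph⟩, c.toSubgraph_connected.coe, fun v hv => ?_⟩
  · rw [Walk.verts_toSubgraph]
    exact c.support.finite_toSet
  · exact hc.ncard_neighborSet_toSubgraph_eq_two (by simpa using hv)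

namespace TwoConnected

lemma exists_ne_and_ne (hG : TwoConnected G) (u v : V) : ∃ z, z ≠ u ∧ z ≠ v := by
  obtain ⟨a, b, c, hab, hac, hbc⟩ := hG.2.1
  by_contra! h
  rcases eq_or_ne a u with rfl | hau
  · exact hbc ((h b hab.symm).trans (h c hac.symm).symm)
  rcases eq_or_ne b u with rfl | hbu
  · exact hac ((h a hau).trans (h c hbc.symm).symm)
  · exact hab ((h a hau).trans (h b hbu).symm)

lemma exists_isPath_avoiding (hG : TwoConnected G) {u x y : V} (hx : x ≠ u) (hy : y ≠ u) :
    ∃ p : G.Walk x y, p.IsPath ∧ u ∉ p.support := by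
  classical
  have hmem (z : V) (hz : z ≠ u) : z ∈ ((⊤ : G.Subgraph).deleteVerts {u}).verts := by simpa
  obtain ⟨W⟩ := (hG.2.2 u).preconnected ⟨x, hmem x hx⟩ ⟨y, hmem y hy⟩
  let p := W.map (Subgraph.hom _)
  refine ⟨p.bypass, p.bypass_isPath, fun hu => ?_⟩
  have := p.support_bypass_subset_support hu
  rw [Walk.support_map, List.mem_map] at this
  obtain ⟨z, -, hz⟩ := this
  exact z.2.2 hz

lemma exists_adj_ne (hG : TwoConnected G) (u v : V) : ∃ w, G.Adj u w ∧ w ≠ v := by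
  obtain ⟨z, hzu, hzv⟩ := hG.exists_ne_and_ne u v
  obtain ⟨p, hv⟩ : ∃ p : G.Walk u z, u = v ∨ v ∉ p.support := by
    rcases eq_or_ne u v with rfl | huv
    · exact ⟨(hG.1.preconnected u z).some, .inl rfl⟩
    · obtain ⟨p, -, hp⟩ := hG.exists_isPath_avoiding huv hzv
      exact ⟨p, .inr hp⟩
  have hp : ¬ p.Nil := Walk.not_nil_of_ne hzu.symm
  refine ⟨p.snd, p.adj_snd hp, ?_⟩
  rcases hv with rfl | hv
  · exact (p.adj_snd hp).ne.symm
  · exact fun h => hv (h ▸ List.mem_of_mem_tail (p.snd_mem_tail_support hp))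

lemma exists_isCycleSubgraph (hG : TwoConnected G) : ∃ C : G.Subgraph, IsCycleSubgraph G C := by
  obtain ⟨u⟩ := hG.1.nonempty
  obtain ⟨v, huv, -⟩ := hG.exists_adj_ne u u
  obtain ⟨w, huw, hwv⟩ := hG.exists_adj_ne u v
  obtain ⟨p, hp, hup⟩ := hG.exists_isPath_avoiding huv.ne' huw.ne'
  have hcycle : (Walk.cons huv (p.concat huw.symm)).IsCycle := by
    refine (Walk.cons_isCycle_iff _ _).2 ⟨hp.concat hup huw.symm, fun he => ?_⟩
    rw [Walk.edges_concat, List.concat_eq_append, List.mem_append, List.mem_singleton] at he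
    rcases he with he | he
    · exact hup (p.fst_mem_support_of_mem_edges he)
    · grind
  exact ⟨_, hcycle.isCycleSubgraph⟩

lemma exists_isEarStep_adj (hG : TwoConnected G) {A : G.Subgraph} {a u v : V}
    (ha : a ∈ A.verts) (hu : u ∈ A.verts) (hau : a ≠ u) (huv : G.Adj u v) :
    ∃ B, IsEarStep G A B ∧ B.Adj u v := by
  obtain ⟨p, hp, hup⟩ := hG.exists_isPath_avoiding huv.ne' hau
  obtain ⟨x, hx, q, hq, hqp, hqA⟩ := hp.exists_isPath_to_first_mem ha
  have huq : u ∉ q.support := fun h => hup (hqp h)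
  refine ⟨A ⊔ (Walk.cons huv q).toSubgraph,
    ⟨u, x, .cons huv q, ?_, hq.cons huq, hu, hx, ?_, rfl⟩, .inr (by simp)⟩
  · rintro rfl
    exact huq q.end_mem_support
  · simp only [Walk.support_cons, List.mem_cons, forall_eq_or_imp, ne_eq, not_true_eq_false,
      false_imp_iff, true_and]
    exact fun z hz _ hzx hzA => hzx (hqA z hz hzA)

lemma exists_eq_or_isEarStep (hG : TwoConnected G) {A : G.Subgraph} (hA : A.verts.Nontrivial)
    (u v : V) :
    ∃ B, (B = A ∨ IsEarStep G A B) ∧ A ≤ B ∧ (u ∈ A.verts → G.Adj u v → B.Adj u v) := by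
  by_cases h : u ∈ A.verts ∧ G.Adj u v
  · obtain ⟨a, ha, hau⟩ := hA.exists_ne u
    obtain ⟨B, hB, hadj⟩ := hG.exists_isEarStep_adj ha h.1 hau h.2
    exact ⟨B, .inr hB, hB.le, fun _ _ => hadj⟩
  · exact ⟨A, .inl rfl, le_rfl, fun hu huv => absurd ⟨hu, huv⟩ h⟩

end TwoConnected

end SimpleGraph

/-- Every countable 2-connected graph (with at least three vertices) admits an
ear decomposition. -/
theorem exists_ear_decomposition {V : Type*} [Countable V] (G : SimpleGraph V)
    (hG : TwoConnected G) :
    ∃ Gs : ℕ → G.Subgraph,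
      IsCycleSubgraph G (Gs 0) ∧
      (∀ n : ℕ, Gs (n + 1) = Gs n ∨ IsEarStep G (Gs n) (Gs (n + 1))) ∧
      (⨆ n, Gs n) = ⊤ := by
  obtain ⟨C, hC⟩ := hG.exists_isCycleSubgraph
  have := hG.1.nonempty
  obtain ⟨e, he⟩ := exists_nat_seq_frequently_eq (V × V)
  choose! extend hextend using fun (A : G.Subgraph) (hA : A.verts.Nontrivial) (uv : V × V) =>
    hG.exists_eq_or_isEarStep hA uv.1 uv.2
  let Gs : ℕ → G.Subgraph := fun n => Nat.rec C (fun n A => extend A (e n)) n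
  have hnontrivial (n : ℕ) : (Gs n).verts.Nontrivial := by
    induction n with
    | zero => exact hC.verts_nontrivial
    | succ n ih => exact ih.mono (Subgraph.verts_mono (hextend _ ih (e n)).2.1)
  have hGs (n : ℕ) := hextend (Gs n) (hnontrivial n) (e n)
  refine ⟨Gs, hC, fun n => (hGs n).1, ?_⟩
  exact Subgraph.iSup_eq_top_of_monotone hG.1 (monotone_nat_of_le_succ fun n => (hGs n).2.1)
    (hnontrivial 0).nonempty he fun n => (hGs n).2.2
end

section
/- In a k-connected graph G (k ≥ 1), given a set A of k vertices and a set B of k vertices, there exist k pairwise vertex-disjoint paths each joining a vertex of A to a vertex of B. -/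
/-!
For finite graphs we follow Göring's proof of Menger's theorem, by induction on the number of
edges. If some `A`–`B` separator `S` of `G - xy` has fewer than `k` vertices, then `S` separates
`A` from one endpoint, say `y`, and the other endpoint `x` from `B`. Every set separating `A`
from `S ∪ {x}`, or `S ∪ {y}` from `B`, in `G - xy` then separates `A` from `B` in `G`, so
induction yields `k` disjoint walks on either side. The two families meet only in `S`, at common
endpoints, and are joined there and through the edge `xy`.

For infinite graphs, small separators of all finite pieces of `G` fit together, by compactness
of `V → Bool`, into a small separator of `G`. In a `k`-connected graph no set of fewer than `k`
vertices separates two `k`-sets, and the walks obtained are finally shortened to paths.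
-/

open SimpleGraph

/-- `G` is `k`-connected: it has more than `k` vertices and deleting any set
of fewer than `k` vertices leaves it connected. -/
def KConnected {V : Type*} (G : SimpleGraph V) (k : ℕ) : Prop :=
  (∃ f : Fin (k + 1) → V, Function.Injective f) ∧
    ∀ S : Set V, S.Finite → S.ncard < k → (G.induce Sᶜ).Connected

namespace SimpleGraph

variable {V : Type*}

namespace Walk

variable {G : SimpleGraph V} {S : Set V} {u v w : V}

theorem eq_end_of_mem_support_of_mem {p : G.Walk u v} (hp : ∀ t ∈ p.support.dropLast, t ∉ S)
    {t : V} (ht : t ∈ p.support) (htS : t ∈ S) : t = v := by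
  rw [← p.dropLast_support_concat, List.mem_append, List.mem_singleton] at ht
  exact ht.resolve_left fun h => hp t h htS

theorem edge_notMem_edges_of_mem {p : G.Walk u v} (hp : ∀ t ∈ p.support.dropLast, t ∉ S)
    {x y : V} (hxy : x ≠ y) (hx : x ∈ S) (hy : y ∈ S) : s(x, y) ∉ p.edges := fun he =>
  hxy <| (eq_end_of_mem_support_of_mem hp (p.fst_mem_support_of_mem_edges he) hx).trans
    (eq_end_of_mem_support_of_mem hp (p.snd_mem_support_of_mem_edges he) hy).symm

theorem exists_prefix_to_first_mem : ∀ {u v : V} (p : G.Walk u v), (∃ s ∈ p.support, s ∈ S) →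
    ∃ s ∈ S, ∃ q : G.Walk u s, q.support ⊆ p.support ∧ ∀ t ∈ q.support.dropLast, t ∉ S
  | _, _, nil, ⟨s, hs, hsS⟩ => by
    rw [support_nil, List.mem_singleton] at hs
    subst hs
    exact ⟨s, hsS, nil, List.Subset.refl _, by simp⟩
  | u, _, cons h p, ⟨s, hs, hsS⟩ => by
    by_cases hu : u ∈ S
    · exact ⟨u, hu, nil, by simp, by simp⟩
    have hs' : s ∈ p.support := by
      rw [support_cons, List.mem_cons] at hs
      exact hs.resolve_left (by rintro rfl; exact hu hsS)
    obtain ⟨s', hs'S, q, hqp, hq⟩ := exists_prefix_to_first_mem p ⟨s, hs', hsS⟩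
    refine ⟨s', hs'S, cons h q, List.cons_subset_cons _ hqp, ?_⟩
    simp only [support_cons, List.dropLast_cons_of_ne_nil q.support_ne_nil, List.mem_cons]
    rintro t (rfl | ht)
    exacts [hu, hq t ht]

theorem exists_walk_avoiding_of_mem_support {p : G.Walk u w}
    (hp : ∀ t ∈ p.support.dropLast, t ∉ S) (hv : v ∈ p.support) (hvS : v ∉ S) :
    ∃ q : G.Walk u v, ∀ t ∈ q.support, t ∉ S := by
  classical
  refine ⟨p.takeUntil v hv, fun t ht htS => ?_⟩
  have hsplit := congrArg (fun q : G.Walk u w => q.support.dropLast) (p.take_spec hv)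
  simp only [support_append_eq_support_dropLast_append,
    List.dropLast_append_of_ne_nil (support_ne_nil _)] at hsplit
  rw [← dropLast_support_concat (p.takeUntil v hv), List.mem_append, List.mem_singleton] at ht
  rcases ht with ht | rfl
  · exact hp t (hsplit ▸ List.mem_append_left _ ht) htS
  · exact hvS htS

end Walk

def Separates (G : SimpleGraph V) (A B S : Set V) : Prop :=
  ∀ ⦃a b : V⦄, a ∈ A → b ∈ B → ∀ p : G.Walk a b, ∃ t ∈ p.support, t ∈ S

variable {G : SimpleGraph V} {A B S T : Set V} {x y : V}

theorem Separates.symm (h : G.Separates A B S) : G.Separates B A S := fun _ _ hb ha p => by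
  simpa using h ha hb p.reverse

theorem separates_comm : G.Separates A B S ↔ G.Separates B A S := ⟨.symm, .symm⟩

theorem separates_self_right (G : SimpleGraph V) (A B : Set V) : G.Separates A B B :=
  fun _ b _ hb p => ⟨b, p.end_mem_support, hb⟩

theorem not_separates_iff :
    ¬G.Separates A B S ↔ ∃ a ∈ A, ∃ b ∈ B, ∃ p : G.Walk a b, ∀ t ∈ p.support, t ∉ S := by
  simp [Separates]

theorem Separates.mem_of_mem_support (hS : G.Separates A B S) {a b c d v : V} (ha : a ∈ A)
    (hb : b ∈ B) {p : G.Walk a c} {q : G.Walk b d} (hp : ∀ t ∈ p.support.dropLast, t ∉ S)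
    (hq : ∀ t ∈ q.support.dropLast, t ∉ S) (hvp : v ∈ p.support) (hvq : v ∈ q.support) :
    v ∈ S := by
  by_contra hvS
  obtain ⟨p', hp'⟩ := Walk.exists_walk_avoiding_of_mem_support hp hvp hvS
  obtain ⟨q', hq'⟩ := Walk.exists_walk_avoiding_of_mem_support hq hvq hvS
  obtain ⟨t, ht, htS⟩ := hS ha hb (p'.append q'.reverse)
  rw [Walk.mem_support_append_iff, Walk.support_reverse, List.mem_reverse] at ht
  exact ht.elim (hp' t · htS) (hq' t · htS)

theorem Separates.singleton_left_or_right (h : G.Separates A B S) (v : V) :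
    G.Separates A {v} S ∨ G.Separates {v} B S := by
  by_contra! hAB
  obtain ⟨hA, hB⟩ := hAB
  rw [not_separates_iff] at hA hB
  obtain ⟨a, ha, _, rfl, p, hp⟩ := hA
  obtain ⟨_, rfl, b, hb, q, hq⟩ := hB
  obtain ⟨t, ht, htS⟩ := h ha hb (p.append q)
  rw [Walk.mem_support_append_iff] at ht
  exact ht.elim (hp t · htS) (hq t · htS)

theorem Separates.insert_insert_of_deleteEdges (h : (G.deleteEdges {s(x, y)}).Separates A B S) :
    G.Separates A B (insert x (insert y S)) := by
  intro a b ha hb p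
  by_cases he : s(x, y) ∈ p.edges
  · exact ⟨x, p.fst_mem_support_of_mem_edges he, Set.mem_insert _ _⟩
  · obtain ⟨t, ht, htS⟩ := h ha hb (p.toDeleteEdge _ he)
    exact ⟨t, by simpa using ht, Set.mem_insert_of_mem _ (Set.mem_insert_of_mem _ htS)⟩

theorem Walk.exists_deleteEdges_prefix_to_first_mem {Z : Set V} {a b : V} (p : G.Walk a b)
    (hxy : x ≠ y) (hx : x ∈ Z) (hy : y ∈ Z) (hpZ : ∃ z ∈ p.support, z ∈ Z) :
    ∃ z ∈ Z, ∃ q : (G.deleteEdges {s(x, y)}).Walk a z,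
      q.support ⊆ p.support ∧ ∀ t ∈ q.support.dropLast, t ∉ Z := by
  obtain ⟨z, hz, q, hqp, hq⟩ := p.exists_prefix_to_first_mem hpZ
  exact ⟨z, hz, q.toDeleteEdge _ (edge_notMem_edges_of_mem hq hxy hx hy), by simpa using hqp,
    by simpa using hq⟩

theorem Separates.not_separates_singleton_or_of_deleteEdges (hxy : x ≠ y)
    (hS : (G.deleteEdges {s(x, y)}).Separates A B S) (h : ¬G.Separates A B S) :
    ¬(G.deleteEdges {s(x, y)}).Separates A {x} S ∨
      ¬(G.deleteEdges {s(x, y)}).Separates A {y} S := by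
  obtain ⟨a, ha, b, hb, p, hp⟩ := not_separates_iff.1 h
  obtain ⟨z, hz, q, hqp, -⟩ := p.exists_deleteEdges_prefix_to_first_mem (Z := {x, y}) hxy
    (Set.mem_insert _ _) (Set.mem_insert_of_mem _ rfl) <| by
      obtain ⟨t, ht, htS⟩ := hS.insert_insert_of_deleteEdges ha hb p
      exact ⟨t, ht, htS.imp_right fun htS => htS.resolve_right (hp t ht)⟩
  have hq : ¬(G.deleteEdges {s(x, y)}).Separates A {z} S :=
    not_separates_iff.2 ⟨a, ha, z, rfl, q, fun t ht => hp t (hqp ht)⟩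
  rcases hz with rfl | rfl
  exacts [.inl hq, .inr hq]

theorem Separates.deleteEdges_opposite_sides (hxy : x ≠ y)
    (hS : (G.deleteEdges {s(x, y)}).Separates A B S) (h : ¬G.Separates A B S) :
    ((G.deleteEdges {s(x, y)}).Separates A {y} S ∧ (G.deleteEdges {s(x, y)}).Separates {x} B S) ∨
      ((G.deleteEdges {s(x, y)}).Separates A {x} S ∧
        (G.deleteEdges {s(x, y)}).Separates {y} B S) := by
  -- Some endpoint is reachable from `A` and some from `B` avoiding `S`, but none from both.
  have hA := hS.not_separates_singleton_or_of_deleteEdges hxy h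
  have hB := hS.symm.not_separates_singleton_or_of_deleteEdges hxy (mt Separates.symm h)
  rw [separates_comm (A := B), separates_comm (A := B)] at hB
  have := hS.singleton_left_or_right x
  have := hS.singleton_left_or_right y
  tauto

theorem Separates.of_deleteEdges_insert (hxy : x ≠ y)
    (hS : (G.deleteEdges {s(x, y)}).Separates A B S)
    (hy : (G.deleteEdges {s(x, y)}).Separates A {y} S)
    (hT : (G.deleteEdges {s(x, y)}).Separates A (insert x S) T) : G.Separates A B T := by
  intro a b ha hb p
  obtain ⟨z, hz, q, hqp, hq⟩ := p.exists_deleteEdges_prefix_to_first_mem hxy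
    (Set.mem_insert _ _) (Set.mem_insert_of_mem _ (Set.mem_insert _ _))
    (hS.insert_insert_of_deleteEdges ha hb p)
  by_cases hzX : z ∈ insert x S
  · obtain ⟨t, ht, htT⟩ := hT ha hzX q
    exact ⟨t, hqp ht, htT⟩
  · obtain rfl : z = y := by
      simp only [Set.mem_insert_iff, not_or] at hz hzX
      tauto
    obtain ⟨t, ht, htS⟩ := hy ha rfl q
    obtain rfl := Walk.eq_end_of_mem_support_of_mem hq ht
      (Set.mem_insert_of_mem _ (Set.mem_insert_of_mem _ htS))
    exact absurd (Set.mem_insert_of_mem _ htS) hzX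

structure Linkage (G : SimpleGraph V) (A B : Set V) (k : ℕ) where
  src : Fin k → V
  tgt : Fin k → V
  walk : ∀ i, G.Walk (src i) (tgt i)
  src_mem : ∀ i, src i ∈ A
  tgt_mem : ∀ i, tgt i ∈ B
  disjoint : ∀ i j, i ≠ j → ∀ v ∈ (walk i).support, v ∉ (walk j).support

namespace Linkage

variable {k : ℕ}

def map {W : Type*} {H : SimpleGraph W} {A B : Set W} (f : G →g H) (hf : Function.Injective f)
    (L : G.Linkage (f ⁻¹' A) (f ⁻¹' B) k) : H.Linkage A B k where
  src i := f (L.src i)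
  tgt i := f (L.tgt i)
  walk i := (L.walk i).map f
  src_mem := L.src_mem
  tgt_mem := L.tgt_mem
  disjoint i j hij v hvi hvj := by
    rw [Walk.support_map, List.mem_map] at hvi hvj
    obtain ⟨t, ht, rfl⟩ := hvi
    obtain ⟨t', ht', htt'⟩ := hvj
    exact L.disjoint i j hij t ht (hf htt' ▸ ht')

def mapLe {H : SimpleGraph V} (hGH : G ≤ H) (L : G.Linkage A B k) : H.Linkage A B k :=
  L.map (Hom.ofLE hGH) Function.injective_id

@[simp]
theorem support_walk_mapLe {H : SimpleGraph V} (hGH : G ≤ H) (L : G.Linkage A B k) (i : Fin k) :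
    ((L.mapLe hGH).walk i).support = (L.walk i).support :=
  Walk.support_mapLe_eq_support _ _

theorem tgt_injective (L : G.Linkage A B k) : Function.Injective L.tgt := fun i j hij => by
  by_contra hne
  refine L.disjoint i j hne _ (L.walk i).end_mem_support ?_
  rw [hij]
  exact (L.walk j).end_mem_support

theorem exists_tgt_eq (L : G.Linkage A B k) (hB : B.Finite) (hBk : B.ncard = k) {b : V}
    (hb : b ∈ B) : ∃ i, L.tgt i = b := by
  have hrange : Set.range L.tgt = B :=
    Set.eq_of_subset_of_ncard_le (Set.range_subset_iff.2 L.tgt_mem)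
      (by rw [Set.ncard_range_of_injective L.tgt_injective, Nat.card_fin, hBk]) hB
  rw [← hrange] at hb
  exact hb

theorem exists_trim (L : G.Linkage A B k) :
    ∃ L' : G.Linkage A B k, ∀ i, ∀ t ∈ (L'.walk i).support.dropLast, t ∉ B := by
  choose s hs q hqp hq using fun i =>
    (L.walk i).exists_prefix_to_first_mem ⟨L.tgt i, (L.walk i).end_mem_support, L.tgt_mem i⟩
  exact ⟨⟨L.src, s, q, L.src_mem, hs, fun i j hij v hvi hvj =>
    L.disjoint i j hij v (hqp i hvi) (hqp j hvj)⟩, hq⟩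

theorem exists_extend (L : G.Linkage A (insert x S) k) (hxy : G.Adj x y)
    (hy : ∀ i, y ∉ (L.walk i).support) :
    ∃ L' : G.Linkage A (insert y S) k, ∀ i,
      (L.tgt i = x → L'.tgt i = y) ∧ (L.tgt i ≠ x → L'.tgt i = L.tgt i) ∧
      ∀ v ∈ (L'.walk i).support, v ∈ (L.walk i).support ∨ v = y ∧ L.tgt i = x := by
  classical
  have hext : ∀ i, ∃ p : G.Walk (L.src i) (if L.tgt i = x then y else L.tgt i),
      ∀ v ∈ p.support, v ∈ (L.walk i).support ∨ v = y ∧ L.tgt i = x := by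
    intro i
    by_cases hi : L.tgt i = x
    · refine ⟨((L.walk i).concat (hi.symm ▸ hxy)).copy rfl (if_pos hi).symm, fun v hv => ?_⟩
      simp only [Walk.support_copy, Walk.support_concat, List.mem_append, List.mem_singleton] at hv
      exact hv.imp_right (⟨·, hi⟩)
    · exact ⟨(L.walk i).copy rfl (if_neg hi).symm, fun v hv => .inl (by simpa using hv)⟩
  choose p hp using hext
  refine ⟨⟨L.src, _, p, L.src_mem, fun i => ?_, fun i j hij v hvi hvj => ?_⟩,
    fun i => ⟨fun hi => if_pos hi, fun hi => if_neg hi, hp i⟩⟩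
  · split_ifs with hi
    · exact Set.mem_insert _ _
    · exact Set.mem_insert_of_mem _ ((L.tgt_mem i).resolve_left hi)
  · rcases hp i v hvi with hvi | ⟨rfl, hi⟩ <;> rcases hp j v hvj with hvj | ⟨hvy, hj⟩
    · exact L.disjoint i j hij v hvi hvj
    · exact hy i (hvy ▸ hvi)
    · exact hy j hvj
    · exact hij (L.tgt_injective (hi.trans hj.symm))

theorem nonempty_glue {C : Set V} (P : G.Linkage A C k) (Q : G.Linkage B C k) (hC : C.Finite)
    (hCk : C.ncard = k)
    (hmeet : ∀ i j, ∀ v ∈ (P.walk i).support, v ∈ (Q.walk j).support → v = P.tgt i) :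
    Nonempty (G.Linkage A B k) := by
  choose σ hσ using fun i => Q.exists_tgt_eq hC hCk (P.tgt_mem i)
  have hσinj : Function.Injective σ := fun i j hij =>
    P.tgt_injective ((hσ i).symm.trans (hij ▸ hσ j))
  have hcross : ∀ i j, i ≠ j → ∀ v ∈ (P.walk i).support, v ∉ (Q.walk (σ j)).support :=
    fun i j hij v hvi hvj => Q.disjoint (σ i) (σ j) (hσinj.ne hij) v
      ((hmeet i _ v hvi hvj).trans (hσ i).symm ▸ (Q.walk (σ i)).end_mem_support) hvj
  refine ⟨⟨P.src, fun i => Q.src (σ i),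
    fun i => (P.walk i).append (((Q.walk (σ i)).reverse).copy (hσ i) rfl), P.src_mem,
    fun i => Q.src_mem (σ i), fun i j hij v hvi hvj => ?_⟩⟩
  simp only [Walk.mem_support_append_iff, Walk.support_copy, Walk.support_reverse,
    List.mem_reverse] at hvi hvj
  rcases hvi with hvi | hvi <;> rcases hvj with hvj | hvj
  · exact P.disjoint i j hij v hvi hvj
  · exact hcross i j hij v hvi hvj
  · exact hcross j i hij.symm v hvj hvi
  · exact Q.disjoint (σ i) (σ j) (hσinj.ne hij) v hvi hvj

end Linkage

theorem nonempty_linkage_of_linkages_deleteEdges {k : ℕ} (hxy : G.Adj x y)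
    (hS : (G.deleteEdges {s(x, y)}).Separates A B S) (hSfin : S.Finite) (hxS : x ∉ S)
    (hyS : y ∉ S) (hk : (insert y S).ncard = k)
    (LA : (G.deleteEdges {s(x, y)}).Linkage A (insert x S) k)
    (LB : (G.deleteEdges {s(x, y)}).Linkage B (insert y S) k) : Nonempty (G.Linkage A B k) := by
  obtain ⟨P, hP⟩ := LA.exists_trim
  obtain ⟨Q, hQ⟩ := LB.exists_trim
  have hcross : ∀ i j, ∀ v ∈ (P.walk i).support, v ∈ (Q.walk j).support → v ∈ S :=
    fun i j v => hS.mem_of_mem_support (P.src_mem i) (Q.src_mem j)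
      (fun t ht htS => hP i t ht (Set.mem_insert_of_mem _ htS))
      (fun t ht htS => hQ j t ht (Set.mem_insert_of_mem _ htS))
  have hYfin : (insert y S).Finite := hSfin.insert y
  have hy : ∀ i, y ∉ ((P.mapLe (G.deleteEdges_le _)).walk i).support := fun i hyi => by
    obtain ⟨j, hj⟩ := Q.exists_tgt_eq hYfin hk (Set.mem_insert y S)
    rw [Linkage.support_walk_mapLe] at hyi
    exact hyS (hcross i j y hyi (by simpa [hj] using (Q.walk j).end_mem_support))
  -- Continue the walk of `P` ending at `x` along `xy`: both families now end in `insert y S`.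
  obtain ⟨P', hP'⟩ := (P.mapLe (G.deleteEdges_le _)).exists_extend hxy hy
  refine P'.nonempty_glue (Q.mapLe (G.deleteEdges_le _)) hYfin hk fun i j v hvi hvj => ?_
  obtain ⟨hx, hnx, hsupp⟩ := hP' i
  rw [Linkage.support_walk_mapLe] at hvj
  rcases hsupp v hvi with hvi | ⟨rfl, hi⟩
  · rw [Linkage.support_walk_mapLe] at hvi
    have hvS := hcross i j v hvi hvj
    have hv := Walk.eq_end_of_mem_support_of_mem (hP i) hvi (Set.mem_insert_of_mem _ hvS)
    exact hv.trans (hnx fun h => hxS (h ▸ hv ▸ hvS)).symm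
  · exact (hx hi).symm

theorem separates_bot_inter (A B : Set V) : (⊥ : SimpleGraph V).Separates A B (A ∩ B) := by
  rintro a b ha hb (_ | ⟨hadj, _⟩)
  · exact ⟨a, Walk.start_mem_support _, ha, hb⟩
  · exact hadj.elim

theorem nonempty_linkage_of_le_ncard_inter [Finite V] {k : ℕ} (h : k ≤ (A ∩ B).ncard) :
    Nonempty (G.Linkage A B k) := by
  have := Fintype.ofFinite ↥(A ∩ B)
  obtain ⟨f⟩ := Function.Embedding.nonempty_of_card_le (α := Fin k) (β := ↥(A ∩ B))
    (by rwa [Fintype.card_fin, ← Nat.card_eq_fintype_card, Nat.card_coe_set_eq])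
  refine ⟨⟨fun i => f i, fun i => f i, fun _ => .nil, fun i => (f i).2.1, fun i => (f i).2.2,
    fun i j hij v hvi hvj => ?_⟩⟩
  rw [Walk.support_nil, List.mem_singleton] at hvi hvj
  exact hij (f.injective (Subtype.ext (hvi.symm.trans hvj)))

theorem nonempty_linkage_of_separates_deleteEdges {k : ℕ} (hxy : G.Adj x y)
    (h : ∀ T, G.Separates A B T → k ≤ T.ncard)
    (ih : ∀ A' B' : Set V, (∀ T, (G.deleteEdges {s(x, y)}).Separates A' B' T → k ≤ T.ncard) →
      Nonempty ((G.deleteEdges {s(x, y)}).Linkage A' B' k))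
    (hS : (G.deleteEdges {s(x, y)}).Separates A B S) (hSfin : S.Finite) (hSk : S.ncard < k)
    (hy : (G.deleteEdges {s(x, y)}).Separates A {y} S)
    (hx : (G.deleteEdges {s(x, y)}).Separates {x} B S) : Nonempty (G.Linkage A B k) := by
  have hX : ∀ T, (G.deleteEdges {s(x, y)}).Separates A (insert x S) T → k ≤ T.ncard :=
    fun T hT => h T (hS.of_deleteEdges_insert hxy.ne hy hT)
  have hY : ∀ T, (G.deleteEdges {s(x, y)}).Separates B (insert y S) T → k ≤ T.ncard := by
    intro T hT
    rw [Sym2.eq_swap] at hS hx hT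
    exact h T (hS.symm.of_deleteEdges_insert hxy.ne.symm hx.symm hT).symm
  have hXk := hX _ (separates_self_right _ _ _)
  have hYk := hY _ (separates_self_right _ _ _)
  have hxS : x ∉ S := fun hxS => by rw [Set.insert_eq_of_mem hxS] at hXk; omega
  have hyS : y ∉ S := fun hyS => by rw [Set.insert_eq_of_mem hyS] at hYk; omega
  obtain ⟨LA⟩ := ih A (insert x S) hX
  obtain ⟨LB⟩ := ih B (insert y S) hY
  exact nonempty_linkage_of_linkages_deleteEdges hxy hS hSfin hxS hyS
    (le_antisymm ((Set.ncard_insert_le y S).trans hSk) hYk) LA LB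

theorem nonempty_linkage_of_forall_le_ncard [Finite V] (G : SimpleGraph V) (A B : Set V) (k : ℕ)
    (h : ∀ S, G.Separates A B S → k ≤ S.ncard) : Nonempty (G.Linkage A B k) := by
  induction hn : G.edgeSet.ncard using Nat.strong_induction_on generalizing G A B with
  | _ n ih =>
  obtain hE | ⟨e, he⟩ := G.edgeSet.eq_empty_or_nonempty
  · obtain rfl := edgeSet_eq_empty.1 hE
    exact nonempty_linkage_of_le_ncard_inter (h _ (separates_bot_inter A B))
  induction e using Sym2.ind with | _ x y => ?_
  have hxy : G.Adj x y := he
  have hlt : (G.deleteEdges {s(x, y)}).edgeSet.ncard < n := by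
    rw [edgeSet_deleteEdges, ← hn]
    exact Set.ncard_sdiff_singleton_lt_of_mem he
  have ih' := fun A' B' hsep => ih _ hlt (G.deleteEdges {s(x, y)}) A' B' hsep rfl
  by_cases hG' : ∀ S, (G.deleteEdges {s(x, y)}).Separates A B S → k ≤ S.ncard
  · obtain ⟨L⟩ := ih' A B hG'
    exact ⟨L.mapLe (G.deleteEdges_le _)⟩
  push Not at hG'
  obtain ⟨S, hS, hSk⟩ := hG'
  rcases hS.deleteEdges_opposite_sides hxy.ne fun hGS => (h S hGS).not_gt hSk with
    ⟨hAy, hxB⟩ | ⟨hAx, hyB⟩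
  · exact nonempty_linkage_of_separates_deleteEdges hxy h ih' hS S.toFinite hSk hAy hxB
  · rw [Sym2.eq_swap] at ih' hS hAx hyB
    exact nonempty_linkage_of_separates_deleteEdges hxy.symm h ih' hS S.toFinite hSk hAx hyB

end SimpleGraph

theorem exists_set_forall_of_finite_character {V : Type*} {P : Finset V → Set V → Prop}
    (hloc : ∀ W S S', (∀ t ∈ W, t ∈ S ↔ t ∈ S') → P W S → P W S')
    (hanti : ∀ W W' S, W' ⊆ W → P W S → P W' S) (hne : ∀ W, ∃ S, P W S) :
    ∃ S, ∀ W, P W S := by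
  classical
  -- Membership in `C W` depends only on the coordinates in `W`, so `C W` is closed.
  let C : Finset V → Set (V → Bool) := fun W => {f | P W {t | f t}}
  have hclosed : ∀ W, IsClosed (C W) := by
    intro W
    rw [← isOpen_compl_iff, isOpen_iff_forall_mem_open]
    refine fun f hf => ⟨(W : Set V).pi fun t => {f t}, fun g hg hgC => hf (hloc W _ _ ?_ hgC),
      isOpen_set_pi W.finite_toSet fun _ _ => isOpen_discrete _, fun t _ => rfl⟩
    intro t ht
    change g t = true ↔ f t = true
    rw [(hg t ht : g t = f t)]
  obtain ⟨f, hf⟩ := IsCompact.nonempty_iInter_of_directed_nonempty_isCompact_isClosed C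
    (fun W₁ W₂ => ⟨W₁ ∪ W₂, fun _ hf => hanti _ _ _ Finset.subset_union_left hf,
      fun _ hf => hanti _ _ _ Finset.subset_union_right hf⟩)
    (fun W => let ⟨S, hS⟩ := hne W; ⟨fun t => decide (t ∈ S), by simpa [C] using hS⟩)
    (fun W => (hclosed W).isCompact) hclosed
  exact ⟨{t | f t}, fun W => Set.mem_iInter.1 hf W⟩

namespace SimpleGraph

variable {V : Type*} {G : SimpleGraph V} {A B : Set V} {k : ℕ}

def IsSmallSeparatorOn (G : SimpleGraph V) (A B : Set V) (k : ℕ) (W : Finset V) (S : Set V) :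
    Prop :=
  (↑W ∩ S).ncard < k ∧ ∀ ⦃a b : V⦄, a ∈ A → b ∈ B → ∀ p : G.Walk a b,
    (∀ t ∈ p.support, t ∈ W) → ∃ t ∈ p.support, t ∈ S

theorem IsSmallSeparatorOn.congr {W : Finset V} {S S' : Set V} (hSS' : ∀ t ∈ W, t ∈ S ↔ t ∈ S')
    (h : G.IsSmallSeparatorOn A B k W S) : G.IsSmallSeparatorOn A B k W S' := by
  refine ⟨?_, fun a b ha hb p hp => ?_⟩
  · convert h.1 using 2
    exact Set.ext fun t => and_congr_right fun ht => (hSS' t ht).symm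
  · obtain ⟨t, ht, htS⟩ := h.2 ha hb p hp
    exact ⟨t, ht, (hSS' t (hp t ht)).1 htS⟩

theorem IsSmallSeparatorOn.anti {W W' : Finset V} {S : Set V} (hW : W' ⊆ W)
    (h : G.IsSmallSeparatorOn A B k W S) : G.IsSmallSeparatorOn A B k W' S :=
  ⟨(Set.ncard_le_ncard (Set.inter_subset_inter_left _ (Finset.coe_subset.2 hW))
    (W.finite_toSet.inter_of_left _)).trans_lt h.1,
    fun _ _ ha hb p hp => h.2 ha hb p fun t ht => hW (hp t ht)⟩

theorem exists_isSmallSeparatorOn (hL : IsEmpty (G.Linkage A B k)) (W : Finset V) :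
    ∃ S, G.IsSmallSeparatorOn A B k W S := by
  have hT : ¬∀ T, (G.induce (W : Set V)).Separates (Subtype.val ⁻¹' A) (Subtype.val ⁻¹' B) T →
      k ≤ T.ncard := fun hT =>
    hL.false ((nonempty_linkage_of_forall_le_ncard _ _ _ _ hT).some.map
      (Embedding.induce _).toHom Subtype.val_injective)
  push Not at hT
  obtain ⟨T, hT, hTk⟩ := hT
  refine ⟨Subtype.val '' T, ?_, fun a b ha hb p hp => ?_⟩
  · rwa [Set.inter_eq_right.2 ((Set.image_subset_range _ _).trans Subtype.range_coe.subset),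
      Set.ncard_image_of_injective _ Subtype.val_injective]
  · obtain ⟨t, ht, htT⟩ := hT ha hb (p.induce _ hp)
    rw [Walk.support_induce, List.mem_attachWith] at ht
    exact ⟨t, ht, t, htT, rfl⟩

theorem nonempty_linkage_of_forall_finite_le_ncard (G : SimpleGraph V) (A B : Set V) (k : ℕ)
    (h : ∀ S : Set V, S.Finite → G.Separates A B S → k ≤ S.ncard) :
    Nonempty (G.Linkage A B k) := by
  classical
  by_contra hL
  obtain ⟨S, hS⟩ := exists_set_forall_of_finite_character (fun _ _ _ => IsSmallSeparatorOn.congr)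
    (fun _ _ _ => IsSmallSeparatorOn.anti) (exists_isSmallSeparatorOn (not_nonempty_iff.1 hL))
  have hsmall : ∀ T ⊆ S, T.Finite → T.ncard < k := fun T hTS hT => by
    simpa [hT.coe_toFinset, Set.inter_eq_left.2 hTS] using (hS hT.toFinset).1
  have hfin : S.Finite := by
    by_contra hinf
    obtain ⟨T, hTS, hT, hTk⟩ := Set.Infinite.exists_subset_ncard_eq hinf k
    exact (hsmall T hTS hT).ne hTk
  refine (hsmall S subset_rfl hfin).not_ge (h S hfin fun a b ha hb p => ?_)
  exact (hS p.support.toFinset).2 ha hb p fun t ht => List.mem_toFinset.2 ht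

end SimpleGraph

theorem KConnected.le_ncard_of_separates {V : Type*} {G : SimpleGraph V} {k : ℕ} {A B S : Set V}
    (hG : KConnected G k) (hA : A.ncard = k) (hB : B.ncard = k) (hS : S.Finite)
    (hsep : G.Separates A B S) : k ≤ S.ncard := by
  by_contra! hlt
  have exists_outside : ∀ {C : Set V}, C.ncard = k → ∃ c ∈ C, c ∉ S := fun hC => by
    by_contra! hCS
    exact (Set.ncard_le_ncard hCS hS).not_gt (hC ▸ hlt)
  obtain ⟨a, ha, haS⟩ := exists_outside hA
  obtain ⟨b, hb, hbS⟩ := exists_outside hB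
  obtain ⟨p⟩ := (hG.2 S hS hlt).preconnected ⟨a, haS⟩ ⟨b, hbS⟩
  have hpS : ∀ t ∈ (p.map (Embedding.induce Sᶜ).toHom).support, t ∉ S := by
    rw [Walk.support_map, List.forall_mem_map]
    exact fun t _ => t.2
  obtain ⟨t, ht, htS⟩ := hsep ha hb (p.map (Embedding.induce Sᶜ).toHom)
  exact hpS t ht htS

theorem menger_linkage_general {V : Type*} (G : SimpleGraph V) (k : ℕ)
    (hG : KConnected G k) (A B : Set V) (hA : A.ncard = k) (hB : B.ncard = k) :
    ∃ (a b : Fin k → V) (p : ∀ i, G.Walk (a i) (b i)),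
      (∀ i, a i ∈ A) ∧ (∀ i, b i ∈ B) ∧ (∀ i, (p i).IsPath) ∧
      ∀ i j, i ≠ j → ∀ v ∈ (p i).support, v ∉ (p j).support := by
  classical
  obtain ⟨L⟩ := G.nonempty_linkage_of_forall_finite_le_ncard A B k fun S hS hsep =>
    hG.le_ncard_of_separates hA hB hS hsep
  exact ⟨L.src, L.tgt, fun i => (L.walk i).bypass, L.src_mem, L.tgt_mem,
    fun i => (L.walk i).bypass_isPath, fun i j hij v hvi hvj =>
      L.disjoint i j hij v ((L.walk i).support_bypass_subset_support hvi)
        ((L.walk j).support_bypass_subset_support hvj)⟩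

/-- Menger's theorem, linkage form: in a `k`-connected graph, between any two
sets of `k` vertices there are `k` pairwise vertex-disjoint paths. -/
theorem menger_linkage {V : Type*} (G : SimpleGraph V) (k : ℕ) (hk : 1 ≤ k)
    (hG : KConnected G k) (A B : Set V) (hA : A.ncard = k) (hB : B.ncard = k) :
    ∃ (a b : Fin k → V) (p : ∀ i, G.Walk (a i) (b i)),
      (∀ i, a i ∈ A) ∧ (∀ i, b i ∈ B) ∧ (∀ i, (p i).IsPath) ∧
      ∀ i j, i ≠ j → ∀ v ∈ (p i).support, v ∉ (p j).support :=
  menger_linkage_general G k hG A B hA hB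
end
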